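/- Let $F$ denote the right-hand side of the Toda lattice in shifted variables: for a pair of real sequences $x=(x_{1,n},x_{2,n})_{n\in\mathbb{Z}}$, $F(x)_{1,n}=\tfrac12\,(x_{1,n}+\chi_{n<0})(x_{2,n+1}-x_{2,n})$ and $F(x)_{2,n}=(x_{1,n}+\chi_{n<0})^2-(x_{1,n-1}+\chi_{n-1<0})^2$, where $\chi_{n<0}=1$ if $n<0$ and $0$ otherwise. Then for every $r>0$ there exists a constant $K(r)>0$ such that for all pairs of sequences $x,y$ with $\|x\|_B\le r$ and $\|y\|_B\le r$ one has $\|F(x)\|_B\le K(r)$ and $\|F(x)-F(y)\|_B\le K(r)\|x-y\|_B$; in particular $F$ maps $B$ into $B$ and is Lipschitz on bounded subsets of $B$. -/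

import Mathlib

/-- The `B`-norm of a pair of real sequences:
`‖y‖_B = sup_{n ≥ 0} (|y₁ₙ| + |y₂ₙ|) + ∑_{n < 0} |n| (|y₁ₙ| + |y₂ₙ|)`. -/
noncomputable def normB (x : (ℤ → ℝ) × (ℤ → ℝ)) : ℝ :=
  (⨆ n : ℕ, (|x.1 (n : ℤ)| + |x.2 (n : ℤ)|)) +
    ∑' k : ℕ, ((k : ℝ) + 1) * (|x.1 (-(k : ℤ) - 1)| + |x.2 (-(k : ℤ) - 1)|)

/-- Membership in the Banach space `B`: the sup over `n ≥ 0` is finite and the weighted sum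
over `n < 0` converges. -/
def memB (x : (ℤ → ℝ) × (ℤ → ℝ)) : Prop :=
  BddAbove (Set.range fun n : ℕ => |x.1 (n : ℤ)| + |x.2 (n : ℤ)|) ∧
  Summable (fun k : ℕ => ((k : ℝ) + 1) * (|x.1 (-(k : ℤ) - 1)| + |x.2 (-(k : ℤ) - 1)|))

/-- The indicator `χ_{n<0}`. -/
def chiNeg (n : ℤ) : ℝ := if n < 0 then 1 else 0

/-- The right-hand side of the Toda lattice in the shifted variables
`x₁ₙ = aₙ - χ_{n<0}`, `x₂ₙ = bₙ`. -/
noncomputable def todaF (x : (ℤ → ℝ) × (ℤ → ℝ)) : (ℤ → ℝ) × (ℤ → ℝ) :=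
  (fun n => (1 / 2) * (x.1 n + chiNeg n) * (x.2 (n + 1) - x.2 n),
   fun n => (x.1 n + chiNeg n) ^ 2 - (x.1 (n - 1) + chiNeg (n - 1)) ^ 2)

/-!
Write `|x|ₙ = |x₁ₙ| + |x₂ₙ|`. Both components of `F x - F y` at site `n` are differences of
products of factors bounded by `r + 1`, so
`|F x - F y|ₙ ≤ 3 (r + 1) (|x - y|ₙ₋₁ + |x - y|ₙ + |x - y|ₙ₊₁)`.
The `B`-norm of a nonnegative sequence is monotone, subadditive and at most doubled by a unit
shift, which turns this pointwise estimate into `‖F x - F y‖_B ≤ 15 (r + 1) ‖x - y‖_B`.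
Boundedness follows by comparing `F x` with `F 0`, whose only nonzero entry is `F(0)₂,₀ = -1`.
-/

noncomputable def seqNormB (u : ℤ → ℝ) : ℝ :=
  (⨆ n : ℕ, u n) + ∑' k : ℕ, ((k : ℝ) + 1) * u (-(k : ℤ) - 1)

def seqMemB (u : ℤ → ℝ) : Prop :=
  BddAbove (Set.range fun n : ℕ => u n) ∧
  Summable fun k : ℕ => ((k : ℝ) + 1) * u (-(k : ℤ) - 1)

namespace seqMemB

variable {u v : ℤ → ℝ}

lemma le_iSup (hu : seqMemB u) (n : ℕ) : u n ≤ ⨆ m : ℕ, u m :=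
  le_ciSup hu.1 n

lemma le_tsum (hu₀ : ∀ n, 0 ≤ u n) (hu : seqMemB u) (k : ℕ) :
    u (-(k : ℤ) - 1) ≤ ∑' j : ℕ, ((j : ℝ) + 1) * u (-(j : ℤ) - 1) := by
  refine le_trans ?_ (hu.2.le_tsum k fun j _ => mul_nonneg (by positivity) (hu₀ _))
  exact le_mul_of_one_le_left (hu₀ _) (by simp)

lemma iSup_nonneg (hu₀ : ∀ n, 0 ≤ u n) (hu : seqMemB u) : 0 ≤ ⨆ m : ℕ, u m :=
  (hu₀ _).trans (hu.le_iSup 0)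

lemma tsum_weighted_nonneg (hu₀ : ∀ n, 0 ≤ u n) :
    0 ≤ ∑' k : ℕ, ((k : ℝ) + 1) * u (-(k : ℤ) - 1) :=
  _root_.tsum_nonneg fun _ => mul_nonneg (by positivity) (hu₀ _)

lemma seqNormB_nonneg (hu₀ : ∀ n, 0 ≤ u n) (hu : seqMemB u) : 0 ≤ seqNormB u :=
  add_nonneg (hu.iSup_nonneg hu₀) (tsum_weighted_nonneg hu₀)

lemma le_seqNormB (hu₀ : ∀ n, 0 ≤ u n) (hu : seqMemB u) (n : ℤ) : u n ≤ seqNormB u := by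
  have hS := hu.iSup_nonneg hu₀
  have hT := tsum_weighted_nonneg hu₀
  unfold seqNormB
  rcases le_or_gt 0 n with hn | hn
  · lift n to ℕ using hn
    linarith [hu.le_iSup n]
  · obtain ⟨k, rfl⟩ : ∃ k : ℕ, n = -(k : ℤ) - 1 := ⟨(-n - 1).toNat, by omega⟩
    linarith [hu.le_tsum hu₀ k]

lemma mono (hu₀ : ∀ n, 0 ≤ u n) (huv : u ≤ v) (hv : seqMemB v) :
    seqMemB u ∧ seqNormB u ≤ seqNormB v := by
  have hw : ∀ k : ℕ, ((k : ℝ) + 1) * u (-(k : ℤ) - 1) ≤ ((k : ℝ) + 1) * v (-(k : ℤ) - 1) :=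
    fun k => mul_le_mul_of_nonneg_left (huv _) (by positivity)
  have hsum := hv.2.of_nonneg_of_le (fun k => mul_nonneg (by positivity) (hu₀ _)) hw
  have hsup : ∀ n : ℕ, u n ≤ ⨆ m : ℕ, v m := fun n => (huv n).trans (hv.le_iSup n)
  exact ⟨⟨⟨_, Set.forall_mem_range.2 hsup⟩, hsum⟩,
    add_le_add (ciSup_le hsup) (hsum.tsum_le_tsum hw hv.2)⟩

lemma add (hu : seqMemB u) (hv : seqMemB v) :
    seqMemB (u + v) ∧ seqNormB (u + v) ≤ seqNormB u + seqNormB v := by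
  have hsup : ∀ n : ℕ, (u + v) n ≤ (⨆ m : ℕ, u m) + ⨆ m : ℕ, v m :=
    fun n => add_le_add (hu.le_iSup n) (hv.le_iSup n)
  have hw : (fun k : ℕ => ((k : ℝ) + 1) * (u + v) (-(k : ℤ) - 1)) =
      fun k : ℕ => ((k : ℝ) + 1) * u (-(k : ℤ) - 1) + ((k : ℝ) + 1) * v (-(k : ℤ) - 1) := by
    simp only [Pi.add_apply, mul_add]
  refine ⟨⟨⟨_, Set.forall_mem_range.2 hsup⟩, hw ▸ hu.2.add hv.2⟩, ?_⟩
  unfold seqNormB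
  rw [hw, hu.2.tsum_add hv.2]
  linarith [ciSup_le hsup]

lemma smul {c : ℝ} (hc : 0 ≤ c) (hu : seqMemB u) :
    seqMemB (c • u) ∧ seqNormB (c • u) = c * seqNormB u := by
  have hw : (fun k : ℕ => ((k : ℝ) + 1) * (c • u) (-(k : ℤ) - 1)) =
      fun k : ℕ => c * (((k : ℝ) + 1) * u (-(k : ℤ) - 1)) := by
    ext k; simp only [Pi.smul_apply, smul_eq_mul]; ring
  have hsup : ∀ n : ℕ, (c • u) n ≤ c * ⨆ m : ℕ, u m :=
    fun n => mul_le_mul_of_nonneg_left (hu.le_iSup n) hc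
  refine ⟨⟨⟨_, Set.forall_mem_range.2 hsup⟩, hw ▸ hu.2.mul_left c⟩, ?_⟩
  unfold seqNormB
  rw [hw, tsum_mul_left, mul_add, Real.mul_iSup_of_nonneg hc]
  rfl

lemma comp_add_one (hu₀ : ∀ n, 0 ≤ u n) (hu : seqMemB u) :
    seqMemB (fun n => u (n + 1)) ∧ seqNormB (fun n => u (n + 1)) ≤ 2 * seqNormB u := by
  set a : ℕ → ℝ := fun k => ((k : ℝ) + 1) * u (-(k : ℤ) - 1)
  set b : ℕ → ℝ := fun k => ((k : ℝ) + 1) * u (-(k : ℤ) - 1 + 1)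
  have hsup : ∀ n : ℕ, u (n + 1) ≤ ⨆ m : ℕ, u m := fun n => by
    exact_mod_cast hu.le_iSup (n + 1)
  have hb : ∀ k : ℕ, b (k + 1) ≤ 2 * a k := fun k => by
    have : (-((k + 1 : ℕ) : ℤ) - 1 + 1) = -(k : ℤ) - 1 := by push_cast; ring
    simp only [b, a, this]
    push_cast
    nlinarith [mul_nonneg (Nat.cast_nonneg (α := ℝ) k) (hu₀ (-(k : ℤ) - 1))]
  have hb₁ : Summable fun k => b (k + 1) :=
    (hu.2.mul_left 2).of_nonneg_of_le (fun k => mul_nonneg (by positivity) (hu₀ _)) hb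
  have hbsum : Summable b := (summable_nat_add_iff 1).1 hb₁
  have hb₀ : b 0 = u 0 := by simp [b]
  have htsum : ∑' k, b k ≤ u 0 + 2 * ∑' k, a k := by
    rw [hbsum.tsum_eq_zero_add, hb₀, ← tsum_mul_left]
    linarith [hb₁.tsum_le_tsum hb (hu.2.mul_left 2)]
  refine ⟨⟨⟨_, Set.forall_mem_range.2 hsup⟩, hbsum⟩, ?_⟩
  change (⨆ n : ℕ, u (n + 1)) + ∑' k, b k ≤ 2 * ((⨆ m : ℕ, u m) + ∑' k, a k)
  have h₀ : u 0 ≤ ⨆ m : ℕ, u m := by exact_mod_cast hu.le_iSup 0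
  linarith [ciSup_le hsup, tsum_weighted_nonneg hu₀]

lemma comp_sub_one (hu₀ : ∀ n, 0 ≤ u n) (hu : seqMemB u) :
    seqMemB (fun n => u (n - 1)) ∧ seqNormB (fun n => u (n - 1)) ≤ 2 * seqNormB u := by
  set a : ℕ → ℝ := fun k => ((k : ℝ) + 1) * u (-(k : ℤ) - 1)
  set b : ℕ → ℝ := fun k => ((k : ℝ) + 1) * u (-(k : ℤ) - 1 - 1)
  have hsup : ∀ n : ℕ, u (n - 1) ≤ seqNormB u := fun n => hu.le_seqNormB hu₀ _
  have hb : ∀ k : ℕ, b k ≤ a (k + 1) := fun k => by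
    have : (-((k + 1 : ℕ) : ℤ) - 1) = -(k : ℤ) - 1 - 1 := by push_cast; ring
    simp only [b, a, this]
    push_cast
    linarith [hu₀ (-(k : ℤ) - 1 - 1)]
  have ha : Summable a := hu.2
  have ha₁ : Summable fun k => a (k + 1) := (summable_nat_add_iff 1).2 ha
  have hbsum : Summable b :=
    ha₁.of_nonneg_of_le (fun k => mul_nonneg (by positivity) (hu₀ _)) hb
  have htsum : ∑' k, b k ≤ ∑' k, a k := by
    rw [ha.tsum_eq_zero_add]
    have : 0 ≤ a 0 := mul_nonneg (by positivity) (hu₀ _)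
    linarith [hbsum.tsum_le_tsum hb ha₁]
  refine ⟨⟨⟨_, Set.forall_mem_range.2 hsup⟩, hbsum⟩, ?_⟩
  have := ciSup_le hsup
  unfold seqNormB at *
  change (⨆ n : ℕ, u (n - 1)) + ∑' k, b k ≤ 2 * ((⨆ m : ℕ, u m) + ∑' k, a k)
  linarith [hu.iSup_nonneg hu₀]

lemma of_le_mul_neighbors {z : ℤ → ℝ} {C : ℝ} (hz₀ : ∀ n, 0 ≤ z n) (hu₀ : ∀ n, 0 ≤ u n)
    (hu : seqMemB u) (hC : 0 ≤ C) (hzu : ∀ n, z n ≤ C * (u (n - 1) + u n + u (n + 1))) :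
    seqMemB z ∧ seqNormB z ≤ 5 * C * seqNormB u := by
  obtain ⟨hm₁, hn₁⟩ := hu.comp_sub_one hu₀
  obtain ⟨hm₂, hn₂⟩ := hm₁.add hu
  obtain ⟨hm₃, hn₃⟩ := hu.comp_add_one hu₀
  obtain ⟨hm₄, hn₄⟩ := hm₂.add hm₃
  obtain ⟨hm₅, hn₅⟩ := hm₄.smul hC
  obtain ⟨hm, hn⟩ := mono hz₀ hzu hm₅
  refine ⟨hm, hn.trans (hn₅.le.trans ?_)⟩
  nlinarith

end seqMemB

def absPair (x : (ℤ → ℝ) × (ℤ → ℝ)) (n : ℤ) : ℝ := |x.1 n| + |x.2 n|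

section absPair

variable {x y : (ℤ → ℝ) × (ℤ → ℝ)}

lemma absPair_nonneg (x : (ℤ → ℝ) × (ℤ → ℝ)) (n : ℤ) : 0 ≤ absPair x n := by
  unfold absPair; positivity

lemma abs_fst_le_absPair (x : (ℤ → ℝ) × (ℤ → ℝ)) (n : ℤ) : |x.1 n| ≤ absPair x n :=
  le_add_of_nonneg_right (abs_nonneg _)

lemma abs_snd_le_absPair (x : (ℤ → ℝ) × (ℤ → ℝ)) (n : ℤ) : |x.2 n| ≤ absPair x n :=
  le_add_of_nonneg_left (abs_nonneg _)

lemma memB_iff_seqMemB : memB x ↔ seqMemB (absPair x) := Iff.rfl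

lemma normB_eq_seqNormB (x : (ℤ → ℝ) × (ℤ → ℝ)) : normB x = seqNormB (absPair x) := rfl

lemma absPair_add_le (x y : (ℤ → ℝ) × (ℤ → ℝ)) (n : ℤ) :
    absPair (x + y) n ≤ absPair x n + absPair y n := by
  simp only [absPair, Prod.fst_add, Prod.snd_add, Pi.add_apply]
  linarith [abs_add_le (x.1 n) (y.1 n), abs_add_le (x.2 n) (y.2 n)]

lemma absPair_sub_le (x y : (ℤ → ℝ) × (ℤ → ℝ)) (n : ℤ) :
    absPair (x - y) n ≤ absPair x n + absPair y n := by
  simp only [absPair, Prod.fst_sub, Prod.snd_sub, Pi.sub_apply]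
  linarith [abs_sub (x.1 n) (y.1 n), abs_sub (x.2 n) (y.2 n)]

lemma memB.add (hx : memB x) (hy : memB y) :
    memB (x + y) ∧ normB (x + y) ≤ normB x + normB y := by
  obtain ⟨hm, hn⟩ := (memB_iff_seqMemB.1 hx).add (memB_iff_seqMemB.1 hy)
  obtain ⟨hm', hn'⟩ := seqMemB.mono (absPair_nonneg _) (absPair_add_le x y) hm
  exact ⟨hm', hn'.trans hn⟩

lemma memB.sub (hx : memB x) (hy : memB y) : memB (x - y) :=
  (seqMemB.mono (absPair_nonneg _) (absPair_sub_le x y)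
    ((memB_iff_seqMemB.1 hx).add (memB_iff_seqMemB.1 hy)).1).1

lemma memB.normB_nonneg (hx : memB x) : 0 ≤ normB x :=
  seqMemB.seqNormB_nonneg (absPair_nonneg x) hx

lemma memB.absPair_le_normB (hx : memB x) (n : ℤ) : absPair x n ≤ normB x :=
  seqMemB.le_seqNormB (absPair_nonneg x) hx n

lemma memB_zero : memB 0 := by
  simp [memB, summable_zero]

lemma normB_zero : normB 0 = 0 := by
  simp [normB]

end absPair

lemma abs_mul_sub_mul_le (p q p' q' : ℝ) :
    |p * q - p' * q'| ≤ |p - p'| * |q| + |p'| * |q - q'| := by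
  calc |p * q - p' * q'| = |(p - p') * q + p' * (q - q')| := by ring_nf
    _ ≤ |p - p'| * |q| + |p'| * |q - q'| := by
      simpa only [abs_mul] using abs_add_le ((p - p') * q) (p' * (q - q'))

lemma abs_sq_sub_sq_le {p p' R : ℝ} (hp : |p| ≤ R) (hp' : |p'| ≤ R) :
    |p ^ 2 - p' ^ 2| ≤ 2 * R * |p - p'| := by
  have := abs_mul_sub_mul_le p p p' p'
  rw [← sq, ← sq] at this
  nlinarith [abs_nonneg (p - p')]

lemma abs_add_chiNeg_le {t r : ℝ} (ht : |t| ≤ r) (n : ℤ) : |t + chiNeg n| ≤ r + 1 := by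
  have : |chiNeg n| ≤ 1 := by unfold chiNeg; split_ifs <;> norm_num
  linarith [abs_add_le t (chiNeg n)]

section todaF

variable {x y : (ℤ → ℝ) × (ℤ → ℝ)} {r : ℝ}

lemma abs_todaF_fst_sub_le (hx : ∀ n, absPair x n ≤ r) (hy : ∀ n, absPair y n ≤ r) (n : ℤ) :
    |(todaF x - todaF y).1 n| ≤
      r * |(x - y).1 n| + (r + 1) / 2 * (|(x - y).2 (n + 1)| + |(x - y).2 n|) := by
  have h₂ : ∀ m, |x.2 m| ≤ r := fun m => (abs_snd_le_absPair x m).trans (hx m)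
  have h₃ : ∀ m, |y.1 m| ≤ r := fun m => (abs_fst_le_absPair y m).trans (hy m)
  have hq : |x.2 (n + 1) - x.2 n| ≤ 2 * r := by
    linarith [abs_sub (x.2 (n + 1)) (x.2 n), h₂ (n + 1), h₂ n]
  have hq' : |(x.2 (n + 1) - x.2 n) - (y.2 (n + 1) - y.2 n)| ≤
      |x.2 (n + 1) - y.2 (n + 1)| + |x.2 n - y.2 n| := by
    rw [show (x.2 (n + 1) - x.2 n) - (y.2 (n + 1) - y.2 n) =
      (x.2 (n + 1) - y.2 (n + 1)) - (x.2 n - y.2 n) by ring]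
    exact abs_sub _ _
  have key := abs_mul_sub_mul_le (x.1 n + chiNeg n) (x.2 (n + 1) - x.2 n) (y.1 n + chiNeg n)
    (y.2 (n + 1) - y.2 n)
  rw [add_sub_add_right_eq_sub] at key
  have hp' := abs_add_chiNeg_le (h₃ n) n
  simp only [todaF, Prod.fst_sub, Prod.snd_sub, Pi.sub_apply]
  rw [show 1 / 2 * (x.1 n + chiNeg n) * (x.2 (n + 1) - x.2 n) -
      1 / 2 * (y.1 n + chiNeg n) * (y.2 (n + 1) - y.2 n) =
      1 / 2 * ((x.1 n + chiNeg n) * (x.2 (n + 1) - x.2 n) -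
      (y.1 n + chiNeg n) * (y.2 (n + 1) - y.2 n)) by ring, abs_mul, abs_of_pos one_half_pos]
  nlinarith [abs_nonneg (x.1 n - y.1 n), abs_nonneg (y.1 n + chiNeg n),
    abs_nonneg ((x.2 (n + 1) - x.2 n) - (y.2 (n + 1) - y.2 n))]

lemma abs_todaF_snd_sub_le (hx : ∀ n, absPair x n ≤ r) (hy : ∀ n, absPair y n ≤ r) (n : ℤ) :
    |(todaF x - todaF y).2 n| ≤ 2 * (r + 1) * (|(x - y).1 (n - 1)| + |(x - y).1 n|) := by
  have h₁ : ∀ m, |x.1 m + chiNeg m| ≤ r + 1 := fun m =>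
    abs_add_chiNeg_le ((abs_fst_le_absPair x m).trans (hx m)) m
  have h₃ : ∀ m, |y.1 m + chiNeg m| ≤ r + 1 := fun m =>
    abs_add_chiNeg_le ((abs_fst_le_absPair y m).trans (hy m)) m
  have hn := abs_sq_sub_sq_le (h₁ n) (h₃ n)
  have hn' := abs_sq_sub_sq_le (h₁ (n - 1)) (h₃ (n - 1))
  simp only [add_sub_add_right_eq_sub] at hn hn'
  simp only [todaF, Prod.fst_sub, Prod.snd_sub, Pi.sub_apply]
  rw [sub_sub_sub_comm]
  linarith [abs_sub ((x.1 n + chiNeg n) ^ 2 - (y.1 n + chiNeg n) ^ 2)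
    ((x.1 (n - 1) + chiNeg (n - 1)) ^ 2 - (y.1 (n - 1) + chiNeg (n - 1)) ^ 2)]

lemma absPair_todaF_sub_le (hx : ∀ n, absPair x n ≤ r) (hy : ∀ n, absPair y n ≤ r) (n : ℤ) :
    absPair (todaF x - todaF y) n ≤
      3 * (r + 1) * (absPair (x - y) (n - 1) + absPair (x - y) n + absPair (x - y) (n + 1)) := by
  have hr : 0 ≤ r := (absPair_nonneg x 0).trans (hx 0)
  have h₁ := abs_todaF_fst_sub_le hx hy n
  have h₂ := abs_todaF_snd_sub_le hx hy n
  unfold absPair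
  nlinarith [abs_nonneg ((x - y).1 (n - 1)), abs_nonneg ((x - y).2 (n - 1)),
    abs_nonneg ((x - y).1 n), abs_nonneg ((x - y).2 n),
    abs_nonneg ((x - y).1 (n + 1)), abs_nonneg ((x - y).2 (n + 1))]

end todaF

lemma todaF_sub_lipschitz {x y : (ℤ → ℝ) × (ℤ → ℝ)} {r : ℝ} (hx : memB x) (hy : memB y)
    (hxr : normB x ≤ r) (hyr : normB y ≤ r) :
    memB (todaF x - todaF y) ∧ normB (todaF x - todaF y) ≤ 15 * (r + 1) * normB (x - y) := by
  have hr : 0 ≤ r := hx.normB_nonneg.trans hxr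
  obtain ⟨hm, hn⟩ := seqMemB.of_le_mul_neighbors (absPair_nonneg _) (absPair_nonneg _)
    (hx.sub hy) (by linarith : 0 ≤ 3 * (r + 1))
    (absPair_todaF_sub_le (fun n => (hx.absPair_le_normB n).trans hxr)
      (fun n => (hy.absPair_le_normB n).trans hyr))
  refine ⟨hm, ?_⟩
  rw [normB_eq_seqNormB, normB_eq_seqNormB]
  linarith

lemma absPair_todaF_zero (n : ℤ) : absPair (todaF 0) n = if n = 0 then 1 else 0 := by
  simp only [absPair, todaF, Prod.fst_zero, Prod.snd_zero, Pi.zero_apply, chiNeg]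
  split_ifs <;> first | omega | norm_num

lemma memB_todaF_zero : memB (todaF 0) ∧ normB (todaF 0) ≤ 1 := by
  have hle : ∀ n : ℕ, absPair (todaF 0) n ≤ 1 := fun n => by
    rw [absPair_todaF_zero]; split_ifs <;> norm_num
  have hsum : (fun k : ℕ => ((k : ℝ) + 1) * absPair (todaF 0) (-(k : ℤ) - 1)) = fun _ => 0 :=
    funext fun k => by rw [absPair_todaF_zero, if_neg (by omega), mul_zero]
  refine ⟨⟨⟨1, Set.forall_mem_range.2 hle⟩, hsum ▸ summable_zero⟩, ?_⟩
  rw [normB_eq_seqNormB, seqNormB, hsum, tsum_zero, add_zero]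
  exact ciSup_le hle

theorem todaF_bounded_and_lipschitz_on_balls_general (r : ℝ) :
    ∃ K : ℝ, 0 < K ∧
      ∀ x y : (ℤ → ℝ) × (ℤ → ℝ), memB x → memB y → normB x ≤ r → normB y ≤ r →
        memB (todaF x) ∧ normB (todaF x) ≤ K ∧
        memB (todaF x - todaF y) ∧ normB (todaF x - todaF y) ≤ K * normB (x - y) := by
  refine ⟨15 * (r + 1) ^ 2 + 1, by positivity, fun x y hx hy hxr hyr => ?_⟩
  have hr : 0 ≤ r := hx.normB_nonneg.trans hxr
  obtain ⟨hm₀, hn₀⟩ := todaF_sub_lipschitz hx memB_zero hxr (normB_zero.trans_le hr)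
  obtain ⟨hmF, hnF⟩ := hm₀.add memB_todaF_zero.1
  rw [sub_add_cancel] at hmF hnF
  rw [sub_zero] at hn₀
  obtain ⟨hm, hn⟩ := todaF_sub_lipschitz hx hy hxr hyr
  refine ⟨hmF, ?_, hm, hn.trans (mul_le_mul_of_nonneg_right ?_ (hx.sub hy).normB_nonneg)⟩
  · nlinarith [memB_todaF_zero.2]
  · nlinarith

/-- The Toda right-hand side `F` maps `B` into `B`, is bounded on bounded sets, and is
Lipschitz on bounded subsets of `B`. -/
theorem todaF_bounded_and_lipschitz_on_balls (r : ℝ) (hr : 0 < r) :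
    ∃ K : ℝ, 0 < K ∧
      ∀ x y : (ℤ → ℝ) × (ℤ → ℝ), memB x → memB y → normB x ≤ r → normB y ≤ r →
        memB (todaF x) ∧ normB (todaF x) ≤ K ∧
        memB (todaF x - todaF y) ∧ normB (todaF x - todaF y) ≤ K * normB (x - y) :=
  todaF_bounded_and_lipschitz_on_balls_general r
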